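/- Let i, j be integers with (n−2)/2 ≤ i < j ≤ n−1. Then χ(i) > χ(j). -/

import Mathlib

/-!
For `i ≥ (n - 2)/2` the summation in `κ(i)` starts at `k = 2i - n + 1`, so after the shift
`k ↦ k + 1` the summands of `κ(i + 1)` face those of `κ(i)` with `k ≥ 2i - n + 2`, one summand
of `κ(i)` being left over. Writing `F(i,k) G(i,k)` with Gaussian binomials, with `m = i - k` and
`c = n - 2i + k - 1`, the quotient of the summand `(i+1, k+1)` by the summand `(i, k)` is
`[(s^(m+k+2) - 1)(s^c - 1)(s^(c-1) t + 1)] / [(s^(k+2) - 1)(s^(c+m) - 1)(s^(c+m-1) t + 1)]`,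
which is at most `1` because `(s^(b+m) - 1)/(s^b - 1)` decreases in `b` and `c ≤ k + 2`.
Hence `κ` is non-increasing from `i` on, while the second summand of `χ` strictly decreases:
its quotient at `i + 1` and `i` is `(s^(i+2) - 1)/(s^2 (s^(i+1) - 1)) < 1`.
-/

open Finset

/-- `t = s^(e/2)` as a real number. -/
noncomputable def tval (s e : ℕ) : ℝ := (s : ℝ) ^ ((e : ℝ) / 2)

/-- `F(i,k) = ∏_{u=n−2i+k−1}^{n−i−2} (s^u·t + 1)`. -/
noncomputable def F (n s e : ℕ) (i k : ℤ) : ℝ :=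
  ∏ u ∈ Finset.Icc ((n:ℤ) - 2*i + k - 1) ((n:ℤ) - i - 2), ((s:ℝ) ^ u * tval s e + 1)

/-- `G(i,k) = s^{(i−k)²} · ∏_{v=1}^{k+1} (s^{i−k+v}−1)/(s^v−1)
  · ∏_{v=1}^{i−k} (s^{n−2i+k−1+v}−1)/(s^v−1)`. -/
noncomputable def G (n s : ℕ) (i k : ℤ) : ℝ :=
  (s:ℝ) ^ ((i - k)^2) *
  (∏ v ∈ Finset.Icc (1:ℤ) (k + 1), ((s:ℝ) ^ (i - k + v) - 1) / ((s:ℝ) ^ v - 1)) *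
  (∏ v ∈ Finset.Icc (1:ℤ) (i - k), ((s:ℝ) ^ ((n:ℤ) - 2*i + k - 1 + v) - 1) / ((s:ℝ) ^ v - 1))

/-- `κ(i) = Σ_{k = max(2i−n+1,−1)}^{i−1} F(i,k)·G(i,k)`, the degree of `(Δ_i, ⊥)`. -/
noncomputable def kappa (n s e : ℕ) (i : ℤ) : ℝ :=
  ∑ k ∈ Finset.Icc (max (2*i - (n:ℤ) + 1) (-1)) (i - 1), F n s e i k * G n s i k

/-- `χ(i) = κ(i) + s^(2n−2i−2)·t·(s^(i+1)−1)/(s−1)`, the degree of the graph `(Δ_i, ⊥∪≈)`. -/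
noncomputable def chi (n s e : ℕ) (i : ℤ) : ℝ :=
  kappa n s e i +
    (s:ℝ) ^ (2*(n:ℤ) - 2*i - 2) * tval s e * ((s:ℝ) ^ (i + 1) - 1) / ((s:ℝ) - 1)

section IntervalProducts

variable {M : Type*} [CommMonoid M] (f : ℤ → M) {a b : ℤ}

theorem prod_Icc_add_one_right_of_le (h : a ≤ b + 1) :
    ∏ u ∈ Icc a (b + 1), f u = (∏ u ∈ Icc a b, f u) * f (b + 1) := by
  rw [← insert_Icc_right_eq_Icc_add_one h, prod_insert (by simp), mul_comm]

theorem prod_Icc_eq_mul_prod_Icc_add_one (h : a ≤ b) :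
    ∏ u ∈ Icc a b, f u = f a * ∏ u ∈ Icc (a + 1) b, f u := by
  rw [← insert_Icc_add_one_left_eq_Icc h, prod_insert (by simp)]

theorem prod_Icc_mul_eq_mul_prod_Icc_add_one (h : a ≤ b + 1) :
    (∏ u ∈ Icc a b, f u) * f (b + 1) = f a * ∏ u ∈ Icc (a + 1) (b + 1), f u := by
  rw [← prod_Icc_add_one_right_of_le f h, prod_Icc_eq_mul_prod_Icc_add_one f h]

theorem prod_Icc_one_comp_add (a b : ℤ) :
    ∏ v ∈ Icc 1 b, f (a + v) = ∏ u ∈ Icc (a + 1) (a + b), f u := by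
  rw [← map_add_left_Icc, prod_map]
  rfl

end IntervalProducts

theorem zpow_sub_one_pos {S : ℝ} (hS : 1 < S) {u : ℤ} (hu : 1 ≤ u) : 0 < S ^ u - 1 :=
  sub_pos.2 (one_lt_zpow₀ hS (by omega))

section GaussianBinomial

variable {S : ℝ} {a b : ℤ}

-- `qbinom S a b` is the Gaussian binomial coefficient `[a + b, b]` in the variable `S`.
noncomputable def qbinom (S : ℝ) (a b : ℤ) : ℝ :=
  ∏ v ∈ Icc 1 b, (S ^ (a + v) - 1) / (S ^ v - 1)

theorem qbinom_pos (hS : 1 < S) (ha : 0 ≤ a) : 0 < qbinom S a b :=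
  prod_pos fun v hv => by
    have hv := (mem_Icc.1 hv).1
    exact div_pos (zpow_sub_one_pos hS (by omega)) (zpow_sub_one_pos hS hv)

theorem qbinom_eq_div :
    qbinom S a b = (∏ u ∈ Icc (a + 1) (a + b), (S ^ u - 1)) / ∏ v ∈ Icc 1 b, (S ^ v - 1) := by
  rw [qbinom, prod_div_distrib, ← prod_Icc_one_comp_add (fun u => S ^ u - 1)]

theorem qbinom_add_one_right_mul (hS : 1 < S) (hb : 0 ≤ b) :
    qbinom S a (b + 1) * (S ^ (b + 1) - 1) = qbinom S a b * (S ^ (a + b + 1) - 1) := by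
  rw [qbinom, prod_Icc_add_one_right_of_le _ (by omega), mul_assoc,
    div_mul_cancel₀ _ (zpow_sub_one_pos hS (by omega)).ne', add_assoc, qbinom]

theorem qbinom_mul_eq_qbinom_add_one_left_mul (hb : 0 ≤ b) :
    qbinom S a b * (S ^ (a + b + 1) - 1) = qbinom S (a + 1) b * (S ^ (a + 1) - 1) := by
  rw [qbinom_eq_div, qbinom_eq_div, div_mul_eq_mul_div, div_mul_eq_mul_div,
    prod_Icc_mul_eq_mul_prod_Icc_add_one (fun u => S ^ u - 1) (by omega), mul_comm,
    add_right_comm a 1 b]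

end GaussianBinomial

theorem zpow_add_sub_one_mul_le {S : ℝ} (hS : 1 ≤ S) {a b m : ℤ} (hm : 0 ≤ m) (hab : a ≤ b) :
    (S ^ (b + m) - 1) * (S ^ a - 1) ≤ (S ^ b - 1) * (S ^ (a + m) - 1) := by
  have hS0 : S ≠ 0 := by positivity
  have hdiff : (S ^ b - 1) * (S ^ (a + m) - 1) - (S ^ (b + m) - 1) * (S ^ a - 1)
      = (S ^ m - 1) * (S ^ b - S ^ a) := by
    rw [zpow_add₀ hS0, zpow_add₀ hS0]; ring
  have h1 : 0 ≤ S ^ m - 1 := sub_nonneg.2 (one_le_zpow₀ hS hm)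
  have h2 : 0 ≤ S ^ b - S ^ a := sub_nonneg.2 (zpow_le_zpow_right₀ hS hab)
  exact sub_nonneg.1 (hdiff ▸ mul_nonneg h1 h2)

-- With `m = i - k` and `c = n - 2i + k - 1` this is the summand `F(i,k) G(i,k)` of `κ(i)`.
noncomputable def kappaSummand (S t : ℝ) (m k c : ℤ) : ℝ :=
  (∏ u ∈ Icc c (c + m - 1), (S ^ u * t + 1)) * (S ^ (m ^ 2) * qbinom S m (k + 1) * qbinom S c m)

section KappaSummand

variable {S t : ℝ} {m k c : ℤ}

theorem kappaSummand_pos (hS : 1 < S) (ht : 0 ≤ t) (hm : 0 ≤ m) (hc : 0 ≤ c) :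
    0 < kappaSummand S t m k c := by
  have hP : 0 < ∏ u ∈ Icc c (c + m - 1), (S ^ u * t + 1) :=
    prod_pos fun u _ => by positivity
  have := qbinom_pos (b := k + 1) hS hm
  have := qbinom_pos (b := m) hS hc
  unfold kappaSummand
  positivity

theorem kappaSummand_add_one_le (hS : 1 < S) (ht : 0 ≤ t) (hm : 0 ≤ m) (hc : 0 ≤ c)
    (hck : c ≤ k + 1) : kappaSummand S t m (k + 1) c ≤ kappaSummand S t m k (c + 1) := by
  set N := (S ^ (k + 2 + m) - 1) * (S ^ (c + 1) - 1) * (S ^ c * t + 1)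
  set D := (S ^ (k + 2) - 1) * (S ^ (c + 1 + m) - 1) * (S ^ (c + m) * t + 1)
  have ratio : kappaSummand S t m (k + 1) c * D = kappaSummand S t m k (c + 1) * N := by
    have hP := prod_Icc_mul_eq_mul_prod_Icc_add_one (fun u => S ^ u * t + 1) (a := c)
      (b := c + m - 1) (by omega)
    have hqk := qbinom_add_one_right_mul (a := m) hS (by omega : 0 ≤ k + 1)
    have hqc := qbinom_mul_eq_qbinom_add_one_left_mul (S := S) (a := c) hm
    simp only [sub_add_cancel] at hP
    rw [show k + 1 + 1 = k + 2 by ring, show m + (k + 1) + 1 = k + 2 + m by ring] at hqk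
    rw [show c + m + 1 = c + 1 + m by ring] at hqc
    unfold kappaSummand
    rw [show c + 1 + m - 1 = c + m by ring, show k + 1 + 1 = k + 2 by ring]
    calc _ = S ^ (m ^ 2) * ((∏ u ∈ Icc c (c + m - 1), (S ^ u * t + 1)) * (S ^ (c + m) * t + 1))
          * (qbinom S m (k + 2) * (S ^ (k + 2) - 1)) * (qbinom S c m * (S ^ (c + 1 + m) - 1)) := by
          ring
      _ = S ^ (m ^ 2) * ((S ^ c * t + 1) * ∏ u ∈ Icc (c + 1) (c + m), (S ^ u * t + 1))
          * (qbinom S m (k + 1) * (S ^ (k + 2 + m) - 1))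
          * (qbinom S (c + 1) m * (S ^ (c + 1) - 1)) := by
          rw [hP, hqk, hqc]
      _ = _ := by ring
  have hND : N ≤ D := by
    have h1 := zpow_add_sub_one_mul_le hS.le hm (show c + 1 ≤ k + 2 by omega)
    have h2 : S ^ c * t + 1 ≤ S ^ (c + m) * t + 1 := by
      gcongr
      · exact hS.le
      · omega
    have h3 : 0 ≤ (S ^ (k + 2 + m) - 1) * (S ^ (c + 1) - 1) :=
      mul_nonneg (zpow_sub_one_pos hS (by omega)).le (zpow_sub_one_pos hS (by omega)).le
    exact mul_le_mul h1 h2 (by positivity) (h3.trans h1)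
  have hD : 0 < D := by
    have := zpow_sub_one_pos hS (show 1 ≤ k + 2 by omega)
    have := zpow_sub_one_pos hS (show 1 ≤ c + 1 + m by omega)
    positivity
  refine le_of_mul_le_mul_right ?_ hD
  rw [ratio]
  exact mul_le_mul_of_nonneg_left hND (kappaSummand_pos hS ht hm (by omega)).le

end KappaSummand

theorem F_mul_G_eq (n s e : ℕ) (i k : ℤ) :
    F n s e i k * G n s i k = kappaSummand s (tval s e) (i - k) k (n - 2 * i + k - 1) := by
  rw [kappaSummand, show (n : ℤ) - 2 * i + k - 1 + (i - k) - 1 = n - i - 2 by ring]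
  rfl

theorem tval_pos {s : ℕ} (hs : 0 < s) (e : ℕ) : 0 < tval s e :=
  Real.rpow_pos_of_pos (by exact_mod_cast hs) _

theorem kappa_add_one_le {n s : ℕ} (e : ℕ) (hs : 1 < s) {i : ℤ} (h2i : (n : ℤ) - 2 ≤ 2 * i) :
    kappa n s e (i + 1) ≤ kappa n s e i := by
  have hS : (1 : ℝ) < s := by exact_mod_cast hs
  have ht := (tval_pos (by omega : 0 < s) e).le
  have hstep : ∀ k ∈ Icc (2 * i - n + 2) (i - 1),
      F n s e (i + 1) (k + 1) * G n s (i + 1) (k + 1) ≤ F n s e i k * G n s i k := by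
    intro k hk
    obtain ⟨hk₁, hk₂⟩ := mem_Icc.1 hk
    rw [F_mul_G_eq, F_mul_G_eq, show i + 1 - (k + 1) = i - k by ring,
      show (n : ℤ) - 2 * (i + 1) + (k + 1) - 1 = n - 2 * i + k - 2 by ring,
      show (n : ℤ) - 2 * i + k - 1 = n - 2 * i + k - 2 + 1 by ring]
    exact kappaSummand_add_one_le hS ht (by omega) (by omega) (by omega)
  have hnonneg : ∀ k ∈ Icc (2 * i - n + 1) (i - 1), 0 ≤ F n s e i k * G n s i k := by
    intro k hk
    obtain ⟨hk₁, hk₂⟩ := mem_Icc.1 hk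
    rw [F_mul_G_eq]
    exact (kappaSummand_pos hS ht (by omega) (by omega)).le
  calc kappa n s e (i + 1)
      = ∑ k ∈ Icc (2 * i - n + 2) (i - 1), F n s e (i + 1) (k + 1) * G n s (i + 1) (k + 1) := by
        rw [kappa, show max (2 * (i + 1) - (n : ℤ) + 1) (-1) = 2 * i - n + 2 + 1 by omega,
          show i + 1 - 1 = i - 1 + 1 by ring, ← map_add_right_Icc, sum_map]
        rfl
    _ ≤ ∑ k ∈ Icc (2 * i - n + 2) (i - 1), F n s e i k * G n s i k := sum_le_sum hstep
    _ ≤ ∑ k ∈ Icc (2 * i - n + 1) (i - 1), F n s e i k * G n s i k :=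
        sum_le_sum_of_subset_of_nonneg (Icc_subset_Icc_left (by omega)) fun k hk _ => hnonneg k hk
    _ = kappa n s e i := by
        rw [kappa, show max (2 * i - (n : ℤ) + 1) (-1) = 2 * i - n + 1 by omega]

-- `χ(i) = κ(i) + chiTail s t (2n) i`.
noncomputable def chiTail (S t : ℝ) (N i : ℤ) : ℝ :=
  S ^ (N - 2 * i - 2) * t * (S ^ (i + 1) - 1) / (S - 1)

theorem chiTail_add_one_lt {S t : ℝ} (hS : 2 ≤ S) (ht : 0 < t) (N : ℤ) {i : ℤ} (hi : 0 ≤ i) :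
    chiTail S t N (i + 1) < chiTail S t N i := by
  unfold chiTail
  have hS0 : S ≠ 0 := by positivity
  set X := S ^ (N - 2 * (i + 1) - 2)
  set w := S ^ (i + 1)
  have hX : 0 < X := by positivity
  have hw : S ≤ w := by simpa using zpow_le_zpow_right₀ (by linarith : 1 ≤ S) (by omega : 1 ≤ i + 1)
  have hpow : S ^ (N - 2 * i - 2) = X * S ^ 2 := by
    rw [← zpow_natCast, ← zpow_add₀ hS0]; congr 1; push_cast; ring
  rw [hpow, zpow_add_one₀ hS0, div_lt_div_iff_of_pos_right (by linarith)]
  have hwS : 0 < w * S - S - 1 := by nlinarith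
  have key : w * S - 1 < S ^ 2 * (w - 1) := by
    linear_combination mul_pos (by linarith : 0 < S - 1) hwS
  calc X * t * (w * S - 1) < X * t * (S ^ 2 * (w - 1)) := by gcongr
    _ = X * S ^ 2 * t * (w - 1) := by ring

theorem chi_add_one_lt {n s : ℕ} (e : ℕ) (hs : 2 ≤ s) {i : ℤ} (h2i : (n : ℤ) - 2 ≤ 2 * i)
    (hi : i ≤ n - 2) : chi n s e (i + 1) < chi n s e i :=
  add_lt_add_of_le_of_lt (kappa_add_one_le e (by omega) h2i)
    (chiTail_add_one_lt (by exact_mod_cast hs) (tval_pos (by omega) e) _ (by omega))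

theorem stmt_17_general (n s e : ℕ) (hs : 2 ≤ s)
    (i j : ℤ) (hi : ((n:ℝ) - 2) / 2 ≤ (i:ℝ)) (hij : i < j) (hj : j ≤ (n:ℤ) - 1) :
    chi n s e i > chi n s e j := by
  have h2i : (n : ℤ) - 2 ≤ 2 * i := by
    have : (n : ℝ) - 2 ≤ 2 * i := by linarith
    exact_mod_cast this
  have hanti : StrictAntiOn (chi n s e) (Set.Icc i (n - 1)) :=
    strictAntiOn_of_add_one_lt Set.ordConnected_Icc fun a _ ⟨hia, _⟩ ⟨_, ha⟩ =>
      chi_add_one_lt e hs (by omega) (by omega)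
  exact hanti ⟨le_rfl, by omega⟩ ⟨hij.le, hj⟩ hij

theorem stmt_17 (n s e : ℕ) (hn : 3 ≤ n) (hs : 2 ≤ s) (he : e ≤ 4)
    (i j : ℤ) (hi : ((n:ℝ) - 2) / 2 ≤ (i:ℝ)) (hij : i < j) (hj : j ≤ (n:ℤ) - 1) :
    chi n s e i > chi n s e j :=
  stmt_17_general n s e hs i j hi hij hj
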